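/- There exists a monotone convex 3-player temporal cooperative game with no basis solution. Concretely, in the game of the paper's counterexample with v(1)=1, v(2)=4, v(3)=4, v(12)=3, v(13)=4, v(21)=4, v(23)=5, v(31)=5, v(32)=5, and all full sequences with worths v(123)=7, v(132)=6, v(213)=8, v(231)=7, v(312)=7, v(321)=7, the constraints x_1 ≥ v(1)=1, x_2 ≥ v(2)=4, x_3 ≥ v(3)=4, and x_1+x_2+x_3 = max_π v(π) = 8 are jointly infeasible. -/

import Mathlib

noncomputable section

/-- Sequences of players (lists over `Fin n`); injective sequences are `Nodup` lists. -/
abbrev TSeq (n : ℕ) := List (Fin n)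

/-- `prefBefore π i` is the longest prefix of `π` not containing `i`. -/
def prefBefore {n : ℕ} (π : TSeq n) (i : Fin n) : TSeq n := π.takeWhile (· ≠ i)

/-- The marginal-contribution solution concept. -/
def margSol {n : ℕ} (v : TSeq n → ℝ) (π : TSeq n) (i : Fin n) : ℝ :=
  if i ∈ π then v (prefBefore π i ++ [i]) - v (prefBefore π i) else 0

/-- The extended Shapley value: average marginal contribution over all full sequences,
    identified with permutations of `Fin n` via `List.ofFn`. -/
def extShap {n : ℕ} (v : TSeq n → ℝ) (i : Fin n) : ℝ :=
  (1 / n.factorial : ℝ) * ∑ σ : Equiv.Perm (Fin n), margSol v (List.ofFn ⇑σ) i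

/-- `swapSeq i j π` swaps players `i` and `j` throughout the sequence `π`. -/
def swapSeq {n : ℕ} (i j : Fin n) (π : TSeq n) : TSeq n := π.map (Equiv.swap i j)

/-!
The worths are natural numbers and only the sixteen injective sequences over three players
matter, so monotonicity, convexity and the maximal worth are finite checks that the kernel
decides. The singleton constraints then force `x₁ + x₂ + x₃ ≥ 1 + 4 + 4 = 9 > 8`.
-/

/-- Sequences the paper does not list (`[]` and those with repetitions) are worth `0`. -/
def worth : TSeq 3 → ℕ
  | [0] => 1 | [1] => 4 | [2] => 4
  | [0, 1] => 3 | [0, 2] => 4 | [1, 0] => 4 | [1, 2] => 5 | [2, 0] => 5 | [2, 1] => 5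
  | [0, 1, 2] => 7 | [0, 2, 1] => 6 | [1, 0, 2] => 8
  | [1, 2, 0] => 7 | [2, 0, 1] => 7 | [2, 1, 0] => 7
  | _ => 0

def injSeqs (n : ℕ) : List (TSeq n) :=
  (List.finRange n).sublists.flatMap List.permutations'

theorem mem_injSeqs {n : ℕ} {π : TSeq n} (h : π.Nodup) : π ∈ injSeqs n := by
  obtain ⟨σ, hσ, hsub⟩ := List.subperm_of_subset h fun i _ => List.mem_finRange i
  exact List.mem_flatMap.2 ⟨σ, List.mem_sublists.2 hsub, List.mem_permutations'.2 hσ.symm⟩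

theorem worth_le_of_isPrefix {π π' : TSeq 3} (h' : π'.Nodup) (hpre : π <+: π') :
    worth π ≤ worth π' := by
  have key : ∀ σ' ∈ injSeqs 3, ∀ σ ∈ σ'.inits, worth σ ≤ worth σ' := by decide
  exact key π' (mem_injSeqs h') π ((List.mem_inits _ _).2 hpre)

theorem worth_convex {π π' : TSeq 3} {i : Fin 3} (h : π.Nodup) (h' : π'.Nodup) (hne : π ≠ [])
    (hi : i ∉ π) (hi' : i ∉ π') (hsub : π ⊆ π') :
    worth (π ++ [i]) + worth π' ≤ worth (π' ++ [i]) + worth π := by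
  have key : ∀ σ ∈ injSeqs 3, ∀ σ' ∈ injSeqs 3, ∀ j : Fin 3, σ ≠ [] → j ∉ σ → j ∉ σ' →
      σ ⊆ σ' → worth (σ ++ [j]) + worth σ' ≤ worth (σ' ++ [j]) + worth σ := by
    decide
  exact key π (mem_injSeqs h) π' (mem_injSeqs h') i hne hi hi' hsub

theorem worth_le_eight {π : TSeq 3} (h : π.Nodup) : worth π ≤ 8 := by
  have key : ∀ σ ∈ injSeqs 3, worth σ ≤ 8 := by decide
  exact key π (mem_injSeqs h)

/-- Players 1, 2, 3 of the paper are `0, 1, 2 : Fin 3`. -/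
theorem stmt18 :
    ∃ v : TSeq 3 → ℝ,
      (v [0] = 1 ∧ v [1] = 4 ∧ v [2] = 4 ∧
       v [0,1] = 3 ∧ v [0,2] = 4 ∧ v [1,0] = 4 ∧ v [1,2] = 5 ∧ v [2,0] = 5 ∧ v [2,1] = 5 ∧
       v [0,1,2] = 7 ∧ v [0,2,1] = 6 ∧ v [1,0,2] = 8 ∧ v [1,2,0] = 7 ∧
       v [2,0,1] = 7 ∧ v [2,1,0] = 7) ∧
      -- monotone
      (∀ π π' : TSeq 3, π'.Nodup → π ≠ [] → π <+: π' → v π ≤ v π') ∧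
      -- convex
      (∀ (π π' : TSeq 3) (i : Fin 3), π.Nodup → π'.Nodup → π ≠ [] → π' ≠ [] →
        i ∉ π → i ∉ π' → π.toFinset ⊆ π'.toFinset →
        v (π ++ [i]) - v π ≤ v (π' ++ [i]) - v π') ∧
      -- worth of the optimal sequence is 8
      (v [1,0,2] = 8 ∧ ∀ π : TSeq 3, π.Nodup → π ≠ [] → v π ≤ 8) ∧
      -- no basis solution: the singleton constraints plus efficiency are infeasible
      ¬ ∃ x : Fin 3 → ℝ, x 0 ≥ 1 ∧ x 1 ≥ 4 ∧ x 2 ≥ 4 ∧ x 0 + x 1 + x 2 = 8 := by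
  refine ⟨fun π => worth π, by norm_num [worth], ?_, ?_, ⟨by norm_num [worth], ?_⟩, ?_⟩
  · intro π π' h' _ hpre
    exact Nat.cast_le.2 <| worth_le_of_isPrefix h' hpre
  · intro π π' i h h' hne _ hi hi' hsub
    beta_reduce
    rw [sub_le_sub_iff]
    exact_mod_cast worth_convex h h' hne hi hi'
      fun j hj => List.mem_toFinset.1 (hsub (List.mem_toFinset.2 hj))
  · intro π h _
    beta_reduce
    exact_mod_cast worth_le_eight h
  · rintro ⟨x, h0, h1, h2, hsum⟩
    linarith
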